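/- arXiv:2604.13005 — 5 statements merged into one kernel-verified Lean document; each statement's English description precedes it below -/
import Mathlib

section
/- Let G be a graph on n vertices and let k₁, k₂ be natural numbers. If the upper-Bell colouring graphs B_{≥k₁}(G) and B_{≥k₂}(G) are isomorphic, then one of the following holds: (i) k₁ > n and k₂ > n; (ii) χ(G) < k₁ ≤ n, χ(G) < k₂ ≤ n, and k₁ = k₂; or (iii) k₁ ≤ χ(G) and k₂ ≤ χ(G). -/
open Finset

variable {V : Type*} [Fintype V] [DecidableEq V]

def IsISP (G : SimpleGraph V) (P : Finpartition (univ : Finset V)) : Prop :=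
  ∀ A ∈ P.parts, ∀ u ∈ A, ∀ v ∈ A, ¬ G.Adj u v

def samePart (P : Finpartition (univ : Finset V)) (u v : V) : Prop :=
  ∃ A ∈ P.parts, u ∈ A ∧ v ∈ A

def MovedBy (P Q : Finpartition (univ : Finset V)) (x : V) : Prop :=
  P ≠ Q ∧ ∀ u v : V, u ≠ x → v ≠ x → (samePart P u v ↔ samePart Q u v)

def BellGraph (G : SimpleGraph V) :
    SimpleGraph {P : Finpartition (univ : Finset V) // IsISP G P} where
  Adj P Q := ∃ x, MovedBy P.1 Q.1 x
  symm := by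
    constructor
    rintro P Q ⟨x, hne, h⟩
    exact ⟨x, Ne.symm hne, fun u v hu hv => (h u v hu hv).symm⟩
  loopless := by
    constructor
    rintro P ⟨x, hne, _⟩
    exact hne rfl

def UpperBell (G : SimpleGraph V) (k : ℕ) :
    SimpleGraph {P : Finpartition (univ : Finset V) // IsISP G P ∧ k ≤ P.parts.card} where
  Adj P Q := ∃ x, MovedBy P.1 Q.1 x
  symm := by
    constructor
    rintro P Q ⟨x, hne, h⟩
    exact ⟨x, Ne.symm hne, fun u v hu hv => (h u v hu hv).symm⟩
  loopless := by
    constructor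
    rintro P ⟨x, hne, _⟩
    exact hne rfl

def IsUniversal (G : SimpleGraph V) (v : V) : Prop :=
  ∀ w, w ≠ v → G.Adj v w

/-!
An isomorphism `B_{≥k₁}(G) ≃ B_{≥k₂}(G)` forces the two vertex sets, the partitions of `V` into
at least `k₁` (resp. `k₂`) independent sets, to have the same size. Such a set is empty exactly
when `k > n`. For `χ(G) ≤ m ≤ n` there is a partition into exactly `m` independent sets: start
from an optimal colouring and repeatedly give a fresh colour to one vertex of a colour class of
size at least two. Hence, for `k < k' ≤ n` with `χ(G) < k'`, a partition into `k' - 1` parts lies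
in `B_{≥k}(G)` but not in `B_{≥k'}(G)`, so the vertex counts strictly decrease on `(χ(G), n]`.
-/

namespace SimpleGraph.Coloring

variable {G : SimpleGraph V} {α : Type*} [DecidableEq α]

theorem exists_card_image_eq_succ [Infinite α] (C : G.Coloring α)
    (h : #(univ.image C) < Fintype.card V) :
    ∃ C' : G.Coloring α, #(univ.image C') = #(univ.image C) + 1 := by
  obtain ⟨u, v, huv, hne⟩ : ∃ u v, C u = C v ∧ u ≠ v := by
    by_contra! hinj
    exact h.ne ((card_image_of_injective _ hinj).trans card_univ)
  obtain ⟨c, hc⟩ := Infinite.exists_notMem_finset (univ.image C)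
  have hc' : ∀ w, C w ≠ c := fun w hw => hc (hw ▸ mem_image_of_mem C (mem_univ w))
  refine ⟨Coloring.mk (Function.update C v c) fun {x y} hxy => ?_, ?_⟩
  · simp only [Function.update_apply]
    split_ifs with hx hy hy
    · exact absurd (hx.trans hy.symm ▸ hxy) (G.loopless.irrefl _)
    · exact (hc' y).symm
    · exact hc' x
    · exact C.valid hxy
  · have himage : univ.image (Function.update C v c) = insert c (univ.image C) := by
      ext d
      simp only [mem_image, mem_univ, true_and, mem_insert]
      constructor
      · rintro ⟨w, rfl⟩
        rcases eq_or_ne w v with rfl | hw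
        · exact Or.inl (Function.update_self ..)
        · exact Or.inr ⟨w, (Function.update_of_ne hw ..).symm⟩
      · rintro (rfl | ⟨w, rfl⟩)
        · exact ⟨v, Function.update_self ..⟩
        · rcases eq_or_ne w v with rfl | hw
          · exact ⟨u, by rw [Function.update_of_ne hne, huv]⟩
          · exact ⟨w, Function.update_of_ne hw ..⟩
    change #(univ.image (Function.update C v c)) = _
    rw [himage, card_insert_of_notMem hc]

theorem exists_card_image_eq [Infinite α] (C : G.Coloring α) {m : ℕ}
    (hCm : #(univ.image C) ≤ m) (hm : m ≤ Fintype.card V) :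
    ∃ C' : G.Coloring α, #(univ.image C') = m := by
  induction m, hCm using Nat.le_induction with
  | base => exact ⟨C, rfl⟩
  | succ m _ ih =>
    obtain ⟨C', hC'⟩ := ih (by omega)
    obtain ⟨C'', hC''⟩ := C'.exists_card_image_eq_succ (by omega)
    exact ⟨C'', by omega⟩

theorem isISP_ofSetoid_ker (C : G.Coloring α) :
    IsISP G (Finpartition.ofSetoid (Setoid.ker C)) := by
  intro A hA u hu v hv huv
  obtain ⟨a, -, rfl⟩ := mem_image.1 hA
  simp only [mem_filter, Setoid.ker_def] at hu hv
  exact C.valid huv (hu.2.symm.trans hv.2)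

end SimpleGraph.Coloring

theorem Finpartition.card_parts_ofSetoid_ker {X α : Type*} [Fintype X] [DecidableEq X]
    [DecidableEq α] (f : X → α) : #(ofSetoid (Setoid.ker f)).parts = #(univ.image f) := by
  have hparts : (ofSetoid (Setoid.ker f)).parts =
      (univ.image f).image fun c => ({x | c = f x} : Finset X) := by
    rw [image_image]
    rfl
  rw [hparts]
  refine card_image_of_injOn fun c hc d _ hcd => ?_
  obtain ⟨a, -, rfl⟩ := mem_image.1 hc
  simpa [eq_comm] using congrArg (a ∈ ·) hcd

theorem exists_isISP_card_parts_eq {G : SimpleGraph V} {m : ℕ} (hχ : G.chromaticNumber ≤ m)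
    (hm : m ≤ Fintype.card V) :
    ∃ P : Finpartition (univ : Finset V), IsISP G P ∧ #P.parts = m := by
  obtain ⟨C₀⟩ := SimpleGraph.chromaticNumber_le_iff_colorable.1 hχ
  let C : G.Coloring ℕ := (SimpleGraph.Embedding.completeGraph Fin.valEmbedding).toHom.comp C₀
  have hC : #(univ.image C) ≤ m := by
    have hsub : univ.image C ⊆ range m := image_subset_iff.2 fun v _ => mem_range.2 (C₀ v).isLt
    simpa using card_le_card hsub
  obtain ⟨C', hC'⟩ := C.exists_card_image_eq hC hm
  exact ⟨_, C'.isISP_ofSetoid_ker, (Finpartition.card_parts_ofSetoid_ker C').trans hC'⟩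

def upperBellVertexSet (G : SimpleGraph V) (k : ℕ) : Set (Finpartition (univ : Finset V)) :=
  {P | IsISP G P ∧ k ≤ #P.parts}

section UpperBellVertexSet

variable {G : SimpleGraph V} {a b k : ℕ}

theorem ncard_upperBellVertexSet_eq_of_iso {k₁ k₂ : ℕ}
    (e : UpperBell G k₁ ≃g UpperBell G k₂) :
    (upperBellVertexSet G k₁).ncard = (upperBellVertexSet G k₂).ncard :=
  Nat.card_congr e.toEquiv

theorem upperBellVertexSet_eq_empty_iff :
    upperBellVertexSet G k = ∅ ↔ Fintype.card V < k := by
  refine ⟨fun h => not_le.1 fun hk => ?_, fun hk => ?_⟩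
  · obtain ⟨P, hP, hcard⟩ := exists_isISP_card_parts_eq G.chromaticNumber_le_card le_rfl
    exact h.subset (show P ∈ upperBellVertexSet G k from ⟨hP, hcard ▸ hk⟩)
  · refine Set.eq_empty_of_forall_notMem fun P hP => hk.not_ge ?_
    simpa using hP.2.trans P.card_parts_le_card

theorem upperBellVertexSet_ssubset (hab : a < b) (hχ : G.chromaticNumber < b)
    (hb : b ≤ Fintype.card V) : upperBellVertexSet G b ⊂ upperBellVertexSet G a := by
  have hχ' : G.chromaticNumber ≤ (b - 1 : ℕ) := by exact_mod_cast ENat.le_sub_one_of_lt hχ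
  obtain ⟨P, hP, hcard⟩ := exists_isISP_card_parts_eq hχ' (by omega)
  have hsub : upperBellVertexSet G b ⊆ upperBellVertexSet G a :=
    fun Q hQ => ⟨hQ.1, hab.le.trans hQ.2⟩
  exact (Set.ssubset_iff_of_subset hsub).2
    ⟨P, ⟨hP, by omega⟩, fun hPb => absurd hPb.2 (by omega)⟩

theorem le_chromaticNumber_of_ncard_eq (hab : a < b) (hb : b ≤ Fintype.card V)
    (h : (upperBellVertexSet G a).ncard = (upperBellVertexSet G b).ncard) :
    (b : ℕ∞) ≤ G.chromaticNumber := by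
  by_contra! hχ
  exact (Set.ncard_lt_ncard (upperBellVertexSet_ssubset hab hχ hb)).ne h.symm

end UpperBellVertexSet

theorem stmt3 (G : SimpleGraph V) (k₁ k₂ : ℕ)
    (h : Nonempty (UpperBell G k₁ ≃g UpperBell G k₂)) :
    (Fintype.card V < k₁ ∧ Fintype.card V < k₂) ∨
    (G.chromaticNumber < (k₁ : ℕ∞) ∧ k₁ ≤ Fintype.card V ∧
      G.chromaticNumber < (k₂ : ℕ∞) ∧ k₂ ≤ Fintype.card V ∧ k₁ = k₂) ∨
    ((k₁ : ℕ∞) ≤ G.chromaticNumber ∧ (k₂ : ℕ∞) ≤ G.chromaticNumber) := by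
  obtain ⟨e⟩ := h
  have hN := ncard_upperBellVertexSet_eq_of_iso e
  have hn : Fintype.card V < k₁ ↔ Fintype.card V < k₂ := by
    rw [← upperBellVertexSet_eq_empty_iff, ← upperBellVertexSet_eq_empty_iff,
      ← Set.ncard_eq_zero, hN, Set.ncard_eq_zero]
  rcases lt_or_ge (Fintype.card V) k₁ with h₁ | h₁
  · exact Or.inl ⟨h₁, hn.1 h₁⟩
  have h₂ : k₂ ≤ Fintype.card V := not_lt.1 (hn.not.1 h₁.not_gt)
  rcases lt_trichotomy k₁ k₂ with hlt | rfl | hgt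
  · have hχ := le_chromaticNumber_of_ncard_eq hlt h₂ hN
    exact Or.inr (Or.inr ⟨le_trans (by exact_mod_cast hlt.le) hχ, hχ⟩)
  · rcases lt_or_ge G.chromaticNumber k₁ with hχ | hχ
    · exact Or.inr (Or.inl ⟨hχ, h₁, hχ, h₁, rfl⟩)
    · exact Or.inr (Or.inr ⟨hχ, hχ⟩)
  · have hχ := le_chromaticNumber_of_ncard_eq hgt h₁ hN.symm
    exact Or.inr (Or.inr ⟨hχ, le_trans (by exact_mod_cast hgt.le) hχ⟩)
end

section
/- Every finite graph G on n vertices with maximum degree Δ(G) < n/9 − 1/3 admits a partition of its vertex set into exactly χ(G) independent sets, each of size at least 4. -/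
open Finset

variable {V : Type*} [Fintype V] [DecidableEq V]

/-! Among all proper colorings with `k = χ(G)` colors, take one minimising the total deficiency
`∑ⱼ (m - |class j|)`. If some class `A` has fewer than `m` vertices, at most `(m - 1) Δ` vertices
have a neighbour in `A`, and the classes of size at most `m` cover fewer than `m k` vertices.
Since `k ≤ Δ + 1` (greedy coloring) and `n ≥ 9Δ + 4`, some vertex lies in a class of size larger
than `m` and has no neighbour in `A`; moving it into `A` lowers the deficiency. Hence with
`m = 4` every class has at least four vertices. -/

section Fibers

variable {ι α : Type*} [Fintype ι] [DecidableEq α]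

lemma Finset.card_filter_update_add_ite [DecidableEq ι] (f : ι → α) (v : ι) (a b : α) :
    #{u | Function.update f v a u = b} + (if f v = b then 1 else 0) =
      #{u | f u = b} + (if a = b then 1 else 0) := by
  simp only [card_filter]
  rw [← add_sum_erase _ _ (mem_univ v), ← add_sum_erase _ _ (mem_univ v),
    sum_congr rfl fun u hu => by rw [Function.update_of_ne (ne_of_mem_erase hu)]]
  simp only [Function.update_self]
  omega

lemma Finset.card_filter_card_fiber_le_lt_mul [Fintype α] {f : ι → α} {m : ℕ} {a : α}
    (ha : #{u | f u = a} < m) :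
    #{v | #{u | f u = f v} ≤ m} < m * Fintype.card α := by
  set S : Finset ι := {v | #{u | f u = f v} ≤ m}
  have hle_fiber (j : α) : #{v ∈ S | f v = j} ≤ #{u | f u = j} :=
    card_le_card fun v hv => by simp_all
  have hle_m (j : α) : #{v ∈ S | f v = j} ≤ m := by
    rcases eq_empty_or_nonempty {v ∈ S | f v = j} with hempty | ⟨v, hv⟩
    · simp [hempty]
    · simp only [S, mem_filter, mem_univ, true_and] at hv
      exact (hle_fiber j).trans (hv.2 ▸ hv.1)
  calc #S = ∑ j, #{v ∈ S | f v = j} := card_eq_sum_card_fiberwise fun v _ => mem_univ (f v)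
    _ < ∑ _j : α, m := sum_lt_sum (fun j _ => hle_m j) ⟨a, mem_univ a, (hle_fiber a).trans_lt ha⟩
    _ = m * Fintype.card α := by rw [sum_const, card_univ, smul_eq_mul, mul_comm]

lemma Finset.card_image_fiber_of_surjective [DecidableEq ι] [Fintype α] {f : ι → α}
    (hf : Function.Surjective f) :
    #(univ.image fun a => ({u | f u = a} : Finset ι)) = Fintype.card α := by
  refine (card_image_of_injective _ fun a b hab => ?_).trans card_univ
  obtain ⟨i, rfl⟩ := hf a
  simpa using (Finset.ext_iff.1 hab i).1 (by simp)

lemma Finpartition.ofSetoid_ker_parts [DecidableEq ι] (f : ι → α) :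
    (ofSetoid (Setoid.ker f)).parts = univ.image fun i => ({u | f u = f i} : Finset ι) := by
  simp [ofSetoid, ofSetSetoid, eq_comm]

lemma Finpartition.ofSetoid_ker_parts_of_surjective [DecidableEq ι] [Fintype α] {f : ι → α}
    (hf : Function.Surjective f) :
    (ofSetoid (Setoid.ker f)).parts = univ.image fun a => ({u | f u = a} : Finset ι) := by
  rw [ofSetoid_ker_parts, ← image_univ_of_surjective hf, image_image]
  rfl

end Fibers

namespace SimpleGraph

variable {G : SimpleGraph V} {α : Type*}

omit [Fintype V] in
lemma update_ne_update_of_adj {c : V → α} {v : V} {a : α} (ha : ∀ w, G.Adj v w → c w ≠ a)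
    {u w : V} (huw : G.Adj u w) (hc : u ≠ v → w ≠ v → c u ≠ c w) :
    Function.update c v a u ≠ Function.update c v a w := by
  rcases eq_or_ne u v with rfl | hu
  · rw [Function.update_self, Function.update_of_ne (G.ne_of_adj huw).symm]
    exact (ha w huw).symm
  rcases eq_or_ne w v with rfl | hw
  · rw [Function.update_self, Function.update_of_ne hu]
    exact ha u huw.symm
  · rw [Function.update_of_ne hu, Function.update_of_ne hw]
    exact hc hu hw

omit [Fintype V] in
def Coloring.recolor (C : G.Coloring α) (v : V) (a : α) (ha : ∀ w, G.Adj v w → C w ≠ a) :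
    G.Coloring α :=
  Coloring.mk (Function.update C v a) fun huw =>
    update_ne_update_of_adj ha huw fun _ _ => C.valid huw

omit [DecidableEq V] in
/-- Truncated subtraction: only classes with fewer than `m` vertices contribute. -/
def Coloring.deficiency [Fintype α] [DecidableEq α] (C : G.Coloring α) (m : ℕ) : ℕ :=
  ∑ a, (m - #{v | C v = a})

lemma Coloring.deficiency_recolor_lt [Fintype α] [DecidableEq α] (C : G.Coloring α) {v : V}
    {a : α} (ha : ∀ w, G.Adj v w → C w ≠ a) {m : ℕ} (hsmall : #{u | C u = a} < m)
    (hlarge : m < #{u | C u = C v}) :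
    (C.recolor v a ha).deficiency m < C.deficiency m := by
  have hcard (b : α) : #{u | C.recolor v a ha u = b} + (if C v = b then 1 else 0) =
      #{u | C u = b} + (if a = b then 1 else 0) :=
    card_filter_update_add_ite C v a b
  have hva : C v ≠ a := fun h => by rw [h] at hlarge; omega
  refine sum_lt_sum (fun b _ => ?_) ⟨a, mem_univ a, ?_⟩
  · have := hcard b
    split_ifs at this <;> subst_vars <;> omega
  · have := hcard a
    rw [if_neg hva, if_pos rfl] at this
    omega

def Coloring.finpartition [DecidableEq α] (C : G.Coloring α) : Finpartition (univ : Finset V) :=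
  Finpartition.ofSetoid (Setoid.ker C)

lemma Coloring.isISP_finpartition [DecidableEq α] (C : G.Coloring α) : IsISP G C.finpartition := by
  intro A hA u hu w hw huw
  rw [finpartition, Finpartition.ofSetoid_ker_parts] at hA
  obtain ⟨i, -, rfl⟩ := mem_image.1 hA
  simp only [mem_filter, mem_univ, true_and] at hu hw
  exact C.valid huw (hu.trans hw.symm)

variable [DecidableRel G.Adj]

omit [DecidableEq V] in
lemma exists_forall_adj_ne_of_degree_lt [Fintype α] [DecidableEq α] (c : V → α) {v : V}
    (hv : G.degree v < Fintype.card α) : ∃ a, ∀ w, G.Adj v w → c w ≠ a := by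
  obtain ⟨a, -, ha⟩ := exists_mem_notMem_of_card_lt_card
    (s := (G.neighborFinset v).image c) (t := univ)
    (by rw [card_univ]; exact card_image_le.trans_lt (by rwa [G.card_neighborFinset_eq_degree]))
  exact ⟨a, fun w hw hwa => ha (mem_image.2 ⟨w, (G.mem_neighborFinset v w).2 hw, hwa⟩)⟩

theorem colorable_maxDegree_add_one : G.Colorable (G.maxDegree + 1) := by
  suffices ∀ s : Finset V, ∃ c : V → Fin (G.maxDegree + 1),
      ∀ u ∈ s, ∀ w ∈ s, G.Adj u w → c u ≠ c w by
    obtain ⟨c, hc⟩ := this univ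
    exact ⟨Coloring.mk c fun huw => hc _ (mem_univ _) _ (mem_univ _) huw⟩
  intro s
  induction s using Finset.induction with
  | empty => exact ⟨fun _ => 0, by simp⟩
  | insert v s hv ih =>
    obtain ⟨c, hc⟩ := ih
    obtain ⟨a, ha⟩ := exists_forall_adj_ne_of_degree_lt c (v := v)
      (by simpa using Nat.lt_succ_of_le (G.degree_le_maxDegree v))
    refine ⟨Function.update c v a, fun u hu w hw huw => update_ne_update_of_adj ha huw ?_⟩
    exact fun hu' hw' => hc u ((mem_insert.1 hu).resolve_left hu') w
      ((mem_insert.1 hw).resolve_left hw') huw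

lemma card_filter_exists_adj_le (s : Finset V) :
    #{v | ∃ u ∈ s, G.Adj u v} ≤ #s * G.maxDegree :=
  calc #{v | ∃ u ∈ s, G.Adj u v} ≤ #(s.biUnion fun u => G.neighborFinset u) :=
        card_le_card fun v hv => by simpa using hv
    _ ≤ ∑ u ∈ s, #(G.neighborFinset u) := card_biUnion_le
    _ ≤ #s * G.maxDegree := sum_le_card_nsmul _ _ _ fun u _ => by
        simpa using G.degree_le_maxDegree u

theorem exists_coloring_forall_le_card_colorClass {k m : ℕ} (hG : G.Colorable k)
    (hn : (m - 1) * G.maxDegree + m * k ≤ Fintype.card V) :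
    ∃ C : G.Coloring (Fin k), ∀ j, m ≤ #{v | C v = j} := by
  have : Nonempty (G.Coloring (Fin k)) := hG
  set C := Function.argmin fun C : G.Coloring (Fin k) => C.deficiency m
  refine ⟨C, fun a => ?_⟩
  by_contra! hsmall
  set N : Finset V := {v | ∃ u ∈ ({u | C u = a} : Finset V), G.Adj u v}
  set S : Finset V := {v | #{u | C u = C v} ≤ m}
  have hN : #N ≤ (m - 1) * G.maxDegree :=
    (card_filter_exists_adj_le _).trans (Nat.mul_le_mul_right _ (Nat.le_pred_of_lt hsmall))
  have hS : #S < m * k := by simpa using card_filter_card_fiber_le_lt_mul hsmall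
  obtain ⟨v, -, hv⟩ := exists_mem_notMem_of_card_lt_card (s := N ∪ S) (t := univ)
    (by rw [card_univ]; exact (card_union_le _ _).trans_lt (by omega))
  simp only [N, S, mem_union, mem_filter, mem_univ, true_and, not_or, not_exists, not_and,
    not_le] at hv
  have ha : ∀ w, G.Adj v w → C w ≠ a := fun w hvw hwa => hv.1 w hwa hvw.symm
  exact Function.not_lt_argmin (fun C : G.Coloring (Fin k) => C.deficiency m) _
    (C.deficiency_recolor_lt ha hsmall hv.2)

end SimpleGraph

open SimpleGraph in
theorem stmt4 (G : SimpleGraph V) [DecidableRel G.Adj]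
    (h : (G.maxDegree : ℝ) < (Fintype.card V : ℝ) / 9 - 1 / 3) :
    ∃ P : Finpartition (univ : Finset V), IsISP G P ∧
      (P.parts.card : ℕ∞) = G.chromaticNumber ∧ ∀ A ∈ P.parts, 4 ≤ A.card := by
  have hn : 9 * G.maxDegree + 3 < Fintype.card V := by
    have : (9 * G.maxDegree + 3 : ℝ) < Fintype.card V := by linarith
    exact_mod_cast this
  have hχΔ : G.chromaticNumber ≤ G.maxDegree + 1 := colorable_maxDegree_add_one.chromaticNumber_le
  set k := G.chromaticNumber.toNat
  have hk : (k : ℕ∞) = G.chromaticNumber :=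
    ENat.natCast_toNat (ne_top_of_le_ne_top (by simp) hχΔ)
  have hkΔ : k ≤ G.maxDegree + 1 := by exact_mod_cast hk ▸ hχΔ
  obtain ⟨C, hC⟩ := exists_coloring_forall_le_card_colorClass (m := 4)
    G.colorable_chromaticNumber_of_fintype (by omega)
  have hC_surj : Function.Surjective C := fun j => by
    obtain ⟨v, hv⟩ := card_pos.1 (Nat.lt_of_lt_of_le (by norm_num) (hC j))
    exact ⟨v, (mem_filter.1 hv).2⟩
  have hparts : C.finpartition.parts = univ.image fun j => ({v | C v = j} : Finset V) :=
    Finpartition.ofSetoid_ker_parts_of_surjective hC_surj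
  refine ⟨C.finpartition, C.isISP_finpartition, ?_, fun A hA => ?_⟩
  · rw [hparts, card_image_fiber_of_surjective hC_surj, Fintype.card_fin, hk]
  · rw [hparts] at hA
    obtain ⟨j, -, rfl⟩ := mem_image.1 hA
    exact hC j
end

section
/- Let G be a graph on n vertices and let P* denote the partition of V(G) into n singleton parts. The neighbours of P* in the Bell colouring graph B(G) are exactly the partitions obtained from P* by merging two singletons {u},{v} with uv a non-edge of G, and the induced subgraph of B(G) on the open neighbourhood of P* is isomorphic to the line graph of the complement of G. -/
open Finset

variable {V : Type*} [Fintype V] [DecidableEq V]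

def lineGraphOf (H : SimpleGraph V) : SimpleGraph H.edgeSet where
  Adj e f := e ≠ f ∧ ∃ x, x ∈ (e : Sym2 V) ∧ x ∈ (f : Sym2 V)
  symm := by constructor; rintro e f ⟨h, x, hx, hx'⟩; exact ⟨h.symm, x, hx', hx⟩
  loopless := by constructor; rintro e ⟨h, _⟩; exact h rfl

/-! A partition is determined by its same-part relation, and a move of `x` changes that relation
only at pairs through `x`. Starting from the discrete partition, a move of `x` therefore produces
the partition `P_e` whose only non-singleton part is the part `e = {x, y}` of `x`, and `xy` must be a
non-edge of `G`. Two distinct such partitions `P_e`, `P_f` differ by a single move exactly when `e`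
and `f` share a vertex, which is adjacency in `L(Gᶜ)`. -/

lemma Sym2.eq_of_mem_of_mem_of_ne {α : Type*} {e : Sym2 α} {x a b : α} (hx : x ∈ e) (ha : a ∈ e)
    (hb : b ∈ e) (hax : a ≠ x) (hbx : b ≠ x) : a = b := by
  by_contra hab
  rw [(Sym2.mem_and_mem_iff hab).1 ⟨ha, hb⟩, Sym2.mem_iff] at hx
  rcases hx with rfl | rfl
  exacts [hax rfl, hbx rfl]

section Partitions

variable {P Q : Finpartition (univ : Finset V)} {a b x : V}

lemma samePart_iff_mem_part : samePart P a b ↔ a ∈ P.part b :=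
  P.mem_part_iff_exists.symm

lemma samePart_comm : samePart P a b ↔ samePart P b a :=
  exists_congr fun _ => and_congr_right' and_comm

lemma samePart_self (P : Finpartition (univ : Finset V)) (a : V) : samePart P a a :=
  samePart_iff_mem_part.2 (P.mem_part (mem_univ a))

lemma mem_parts_iff_exists_part_eq {A : Finset V} : A ∈ P.parts ↔ ∃ a, P.part a = A := by
  constructor
  · intro hA
    obtain ⟨a, -, rfl⟩ := P.part_surjOn hA
    exact ⟨a, rfl⟩
  · rintro ⟨a, rfl⟩
    exact P.part_mem.2 (mem_univ a)

lemma eq_of_samePart_iff (h : ∀ a b, samePart P a b ↔ samePart Q a b) : P = Q := by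
  have hpart : P.part = Q.part := by
    ext b a
    rw [← samePart_iff_mem_part, ← samePart_iff_mem_part, h]
  ext A
  rw [mem_parts_iff_exists_part_eq, mem_parts_iff_exists_part_eq, hpart]

lemma eq_of_samePart_iff_of_ne_of_part_eq
    (h : ∀ a b, a ≠ x → b ≠ x → (samePart P a b ↔ samePart Q a b))
    (hx : P.part x = Q.part x) : P = Q := by
  have hx' : ∀ b, samePart P x b ↔ samePart Q x b := fun b => by
    rw [samePart_comm, samePart_iff_mem_part, hx, ← samePart_iff_mem_part, samePart_comm]
  refine eq_of_samePart_iff fun a b => ?_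
  obtain rfl | ha := eq_or_ne a x
  · exact hx' b
  obtain rfl | hb := eq_or_ne b x
  · rw [samePart_comm, hx' a, samePart_comm]
  · exact h a b ha hb

lemma samePart_bot : samePart (⊥ : Finpartition (univ : Finset V)) a b ↔ a = b := by
  simp [samePart, eq_comm]

lemma part_bot : (⊥ : Finpartition (univ : Finset V)).part a = {a} :=
  Finpartition.part_eq_of_mem _ (Finpartition.mem_bot_iff.2 ⟨a, mem_univ a, rfl⟩)
    (mem_singleton_self a)

lemma eq_bot_of_forall_card_eq_one (h : ∀ A ∈ P.parts, #A = 1) : P = ⊥ := by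
  refine eq_of_samePart_iff fun a b => ?_
  rw [samePart_bot]
  constructor
  · rintro ⟨A, hA, ha, hb⟩
    exact Finset.card_le_one.1 (h A hA).le a ha b hb
  · rintro rfl
    exact samePart_self P a

lemma MovedBy.symm (h : MovedBy P Q x) : MovedBy Q P x :=
  ⟨h.1.symm, fun a b ha hb => (h.2 a b ha hb).symm⟩

lemma IsISP.not_adj {G : SimpleGraph V} (hP : IsISP G P) (h : samePart P a b) : ¬G.Adj a b := by
  obtain ⟨A, hA, ha, hb⟩ := h
  exact hP A hA a ha b hb

end Partitions

def edgePartition (e : Sym2 V) : Finpartition (univ : Finset V) :=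
  (⊥ : Finpartition (univ \ e.toFinset)).extend (Sym2.toFinset_ne_empty e) disjoint_sdiff_self_left
    (by simp)

section EdgePartition

variable {e f : Sym2 V} {a b x : V}

lemma edgePartition_parts :
    (edgePartition e).parts = insert e.toFinset ((⊥ : Finpartition (univ \ e.toFinset)).parts) :=
  rfl

lemma samePart_edgePartition : samePart (edgePartition e) a b ↔ a = b ∨ (a ∈ e ∧ b ∈ e) := by
  constructor
  · rintro ⟨A, hA, ha, hb⟩
    rcases mem_insert.1 hA with rfl | hA
    · exact Or.inr ⟨Sym2.mem_toFinset.1 ha, Sym2.mem_toFinset.1 hb⟩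
    · obtain ⟨c, -, rfl⟩ := Finpartition.mem_bot_iff.1 hA
      exact Or.inl ((mem_singleton.1 ha).trans (mem_singleton.1 hb).symm)
  · rintro (rfl | ⟨ha, hb⟩)
    · exact samePart_self _ a
    · exact ⟨e.toFinset, mem_insert_self _ _, Sym2.mem_toFinset.2 ha, Sym2.mem_toFinset.2 hb⟩

lemma samePart_edgePartition_of_ne (hx : x ∈ e) (ha : a ≠ x) (hb : b ≠ x) :
    samePart (edgePartition e) a b ↔ a = b := by
  rw [samePart_edgePartition, or_iff_left_iff_imp]
  exact fun ⟨hae, hbe⟩ => Sym2.eq_of_mem_of_mem_of_ne hx hae hbe ha hb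

lemma part_edgePartition_mk (x y : V) : (edgePartition s(x, y)).part x = {x, y} :=
  Finpartition.part_eq_of_mem _ (by simp [edgePartition_parts, Sym2.toFinset_mk_eq])
    (mem_insert_self x {y})

lemma edgePartition_injOn : Set.InjOn edgePartition {e : Sym2 V | ¬e.IsDiag} := by
  intro e he f _ hef
  induction e using Sym2.ind with | _ u v => ?_
  have huv : samePart (edgePartition f) u v := by
    rw [← hef, samePart_edgePartition]
    exact Or.inr ⟨Sym2.mem_mk_left u v, Sym2.mem_mk_right u v⟩
  rw [samePart_edgePartition] at huv
  rcases huv with rfl | ⟨hu, hv⟩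
  · exact absurd (Sym2.mk_isDiag_iff.2 rfl) he
  · exact Sym2.eq_of_ne_mem (Sym2.mk_isDiag_iff.not.1 he) (Sym2.mem_mk_left u v)
      (Sym2.mem_mk_right u v) hu hv

lemma isISP_edgePartition {G : SimpleGraph V} (he : e ∈ Gᶜ.edgeSet) :
    IsISP G (edgePartition e) := by
  intro A hA a ha b hb
  obtain rfl | hab := eq_or_ne a b
  · exact G.irrefl
  obtain ⟨hae, hbe⟩ := (samePart_edgePartition.1 ⟨A, hA, ha, hb⟩).resolve_left hab
  rw [(Sym2.mem_and_mem_iff hab).1 ⟨hae, hbe⟩, SimpleGraph.mem_edgeSet, SimpleGraph.compl_adj] at he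
  exact he.2

end EdgePartition

section Moves

variable {Q : Finpartition (univ : Finset V)} {e f : Sym2 V} {x y : V}

lemma samePart_edgePartition_mk (x y : V) : samePart (edgePartition s(x, y)) x y :=
  samePart_edgePartition.2 (Or.inr ⟨Sym2.mem_mk_left x y, Sym2.mem_mk_right x y⟩)

lemma movedBy_bot_edgePartition (hxy : x ≠ y) : MovedBy ⊥ (edgePartition s(x, y)) x := by
  refine ⟨fun h => hxy ?_, fun a b ha hb => ?_⟩
  · rw [← samePart_bot, h]
    exact samePart_edgePartition_mk x y
  · rw [samePart_bot, samePart_edgePartition_of_ne (Sym2.mem_mk_left x y) ha hb]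

lemma exists_part_eq_pair_of_movedBy_bot (h : MovedBy ⊥ Q x) : ∃ y, y ≠ x ∧ Q.part x = {x, y} := by
  have hx : x ∈ Q.part x := Q.mem_part (mem_univ x)
  obtain ⟨y, hy, hyx⟩ : ∃ y ∈ Q.part x, y ≠ x := by
    by_contra! hne
    have hQx : Q.part x = {x} := eq_singleton_iff_unique_mem.2 ⟨hx, hne⟩
    exact h.1 (eq_of_samePart_iff_of_ne_of_part_eq h.2 (by rw [part_bot, hQx]))
  refine ⟨y, hyx, Finset.ext fun b => ⟨fun hb => ?_, ?_⟩⟩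
  · obtain rfl | hbx := eq_or_ne b x
    · exact mem_insert_self b {y}
    · have hby : samePart Q b y := ⟨Q.part x, Q.part_mem.2 (mem_univ x), hb, hy⟩
      rw [← h.2 b y hbx hyx, samePart_bot] at hby
      exact hby ▸ mem_insert_of_mem (mem_singleton_self b)
  · rw [mem_insert, mem_singleton]
    rintro (rfl | rfl)
    exacts [hx, hy]

lemma movedBy_bot_iff : MovedBy ⊥ Q x ↔ ∃ y, y ≠ x ∧ Q = edgePartition s(x, y) := by
  constructor
  · intro h
    obtain ⟨y, hyx, hQx⟩ := exists_part_eq_pair_of_movedBy_bot h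
    refine ⟨y, hyx, eq_of_samePart_iff_of_ne_of_part_eq (x := x) (fun a b ha hb => ?_) ?_⟩
    · rw [← h.2 a b ha hb, (movedBy_bot_edgePartition hyx.symm).2 a b ha hb]
    · rw [hQx, part_edgePartition_mk]
  · rintro ⟨y, hyx, rfl⟩
    exact movedBy_bot_edgePartition hyx.symm

lemma exists_mem_mem_of_movedBy_edgePartition (he : ¬e.IsDiag) (hx : x ∉ e)
    (h : MovedBy (edgePartition e) (edgePartition f) x) : ∃ z, z ∈ e ∧ z ∈ f := by
  induction e using Sym2.ind with | _ u v => ?_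
  have hu : u ≠ x := fun hux => hx (hux ▸ Sym2.mem_mk_left u v)
  have hv : v ≠ x := fun hvx => hx (hvx ▸ Sym2.mem_mk_right u v)
  rcases samePart_edgePartition.1 ((h.2 u v hu hv).1 (samePart_edgePartition_mk u v))
    with rfl | ⟨huf, -⟩
  · exact absurd (Sym2.mk_isDiag_iff.2 rfl) he
  · exact ⟨u, Sym2.mem_mk_left u v, huf⟩

lemma exists_movedBy_edgePartition_iff (he : ¬e.IsDiag) (hf : ¬f.IsDiag) :
    (∃ x, MovedBy (edgePartition e) (edgePartition f) x) ↔ e ≠ f ∧ ∃ z, z ∈ e ∧ z ∈ f := by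
  constructor
  · rintro ⟨x, h⟩
    refine ⟨fun hef => h.1 (hef ▸ rfl), ?_⟩
    by_cases hxe : x ∈ e
    · by_cases hxf : x ∈ f
      · exact ⟨x, hxe, hxf⟩
      · obtain ⟨z, hzf, hze⟩ := exists_mem_mem_of_movedBy_edgePartition hf hxf h.symm
        exact ⟨z, hze, hzf⟩
    · exact exists_mem_mem_of_movedBy_edgePartition he hxe h
  · rintro ⟨hef, x, hxe, hxf⟩
    refine ⟨x, fun h => hef (edgePartition_injOn he hf h), fun a b ha hb => ?_⟩
    rw [samePart_edgePartition_of_ne hxe ha hb, samePart_edgePartition_of_ne hxf ha hb]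

lemma insert_sdiff_parts_bot_eq_parts_edgePartition (x y : V) :
    insert ({x, y} : Finset V) ((⊥ : Finpartition (univ : Finset V)).parts \ {{x}, {y}}) =
      (edgePartition s(x, y)).parts := by
  rw [edgePartition_parts, Sym2.toFinset_mk_eq, Finpartition.parts_bot, Finpartition.parts_bot,
    Finset.map_sdiff]
  simp

end Moves

section BellGraph

variable {G : SimpleGraph V}

lemma bellGraph_adj_bot_iff (h : IsISP G ⊥) (Q : {P : Finpartition (univ : Finset V) // IsISP G P}) :
    (BellGraph G).Adj ⟨⊥, h⟩ Q ↔ ∃ e ∈ Gᶜ.edgeSet, Q.1 = edgePartition e := by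
  change (∃ x, MovedBy ⊥ Q.1 x) ↔ _
  constructor
  · rintro ⟨x, hx⟩
    obtain ⟨y, hyx, hQ⟩ := movedBy_bot_iff.1 hx
    refine ⟨s(x, y), ?_, hQ⟩
    rw [SimpleGraph.mem_edgeSet, SimpleGraph.compl_adj]
    exact ⟨hyx.symm, Q.2.not_adj (hQ ▸ samePart_edgePartition_mk x y)⟩
  · rintro ⟨e, he, hQ⟩
    induction e using Sym2.ind with | _ x y => ?_
    exact ⟨x, movedBy_bot_iff.2 ⟨y, (G.compl_adj x y).1 he |>.1.symm, hQ⟩⟩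

noncomputable def lineGraphIsoNeighborSetBot (h : IsISP G ⊥) :
    lineGraphOf Gᶜ ≃g (BellGraph G).induce ((BellGraph G).neighborSet ⟨⊥, h⟩) := by
  let F : Gᶜ.edgeSet → (BellGraph G).neighborSet ⟨⊥, h⟩ := fun e =>
    ⟨⟨edgePartition e, isISP_edgePartition e.2⟩, (bellGraph_adj_bot_iff h _).2 ⟨e, e.2, rfl⟩⟩
  have hF : F.Bijective := by
    constructor
    · intro e f hef
      exact Subtype.ext (edgePartition_injOn (Gᶜ.not_isDiag_of_mem_edgeSet e.2)
        (Gᶜ.not_isDiag_of_mem_edgeSet f.2) (congrArg (·.1.1) hef))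
    · rintro ⟨Q, hQ⟩
      obtain ⟨e, he, hQe⟩ := (bellGraph_adj_bot_iff h Q).1 hQ
      exact ⟨⟨e, he⟩, Subtype.ext (Subtype.ext hQe.symm)⟩
  refine ⟨Equiv.ofBijective F hF, fun {e f} => ?_⟩
  change (∃ x, MovedBy (edgePartition e.1) (edgePartition f.1) x) ↔ e ≠ f ∧ _
  rw [exists_movedBy_edgePartition_iff (Gᶜ.not_isDiag_of_mem_edgeSet e.2)
    (Gᶜ.not_isDiag_of_mem_edgeSet f.2), Subtype.coe_ne_coe]

end BellGraph

theorem stmt7 (G : SimpleGraph V)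
    (Pstar : {P : Finpartition (univ : Finset V) // IsISP G P})
    (hstar : ∀ A ∈ Pstar.1.parts, A.card = 1) :
    (∀ Q : {P : Finpartition (univ : Finset V) // IsISP G P},
      (BellGraph G).Adj Pstar Q ↔
        ∃ u v : V, u ≠ v ∧ ¬ G.Adj u v ∧
          Q.1.parts = insert ({u, v} : Finset V)
            (Pstar.1.parts \ {({u} : Finset V), ({v} : Finset V)})) ∧
    Nonempty
      ((SimpleGraph.induce ((BellGraph G).neighborSet Pstar) (BellGraph G)) ≃g
        lineGraphOf Gᶜ) := by
  obtain ⟨P, hP⟩ := Pstar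
  obtain rfl : P = ⊥ := eq_bot_of_forall_card_eq_one hstar
  refine ⟨fun Q => ?_, ⟨(lineGraphIsoNeighborSetBot hP).symm⟩⟩
  simp only [bellGraph_adj_bot_iff, Sym2.exists, SimpleGraph.mem_edgeSet, SimpleGraph.compl_adj,
    insert_sdiff_parts_bot_eq_parts_edgePartition, ← Finpartition.ext_iff, and_assoc]
end

section
/- Let G be a graph, and let P be an independent set partition of G containing a part A with |A| ≥ 4. Then there exist two distinct vertices a₁, a₂ ∈ A such that the partitions Q₁ and Q₂ obtained from P by splitting a₁ and a₂ respectively (replacing A by A\{aᵢ} and {aᵢ}) are non-adjacent in B(G) and have at least two common neighbours in B(G) that lie outside the closed neighbourhood of P. -/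
open Finset

variable {V : Type*} [Fintype V] [DecidableEq V]

/-!
Pick distinct `a, b, c, d ∈ A`; let `Q₁, Q₂` split `a` and `b` off `A`, and let `R₁`, `R₂` replace
`A` by `{a}, {b}, A \ {a, b}` and by `{a, b}, A \ {a, b}` respectively. Moving `b` (resp. `a`) turns
either split into either `Rᵢ`. A single move changes whether two vertices share a part only for
pairs containing the moved vertex; `Q₁, Q₂` disagree on both pairs `ac` and `bd`, as do `P` and
each `Rᵢ`, so no single move relates them.
-/

namespace Finpartition

variable {α : Type*} [DecidableEq α] {s A S B : Finset α}

def splitOff (P : Finpartition s) (hA : A ∈ P.parts) (hS : S.Nonempty) (hSA : S ⊂ A) :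
    Finpartition s where
  parts := insert S (insert (A \ S) (P.parts.erase A))
  supIndep := by
    have hdisj : ∀ B ∈ P.parts.erase A, Disjoint A B := fun B hB =>
      P.disjoint hA (mem_of_mem_erase hB) (ne_of_mem_erase hB).symm
    rw [supIndep_iff_pairwiseDisjoint, coe_insert, coe_insert]
    refine ((P.disjoint.subset (erase_subset A P.parts)).insert ?_).insert ?_
    · exact fun B hB _ => (hdisj B hB).mono_left sdiff_subset
    · simp only [Set.mem_insert_iff, mem_coe, forall_eq_or_imp]
      exact ⟨fun _ => disjoint_sdiff, fun B hB _ => (hdisj B hB).mono_left hSA.subset⟩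
  sup_parts := by
    rw [sup_insert, sup_insert, id_eq, id_eq, ← sup_assoc, sup_sdiff_cancel_right hSA.subset]
    exact sup_insert.symm.trans (by rw [insert_erase hA, P.sup_parts])
  bot_notMem := by
    simp only [bot_eq_empty, mem_insert, not_or]
    exact ⟨hS.ne_empty.symm, (sdiff_nonempty.2 (not_subset_of_ssubset hSA)).ne_empty.symm,
      fun h => P.bot_notMem (mem_of_mem_erase h)⟩

variable {P : Finpartition s} {hA : A ∈ P.parts} {hS : S.Nonempty} {hSA : S ⊂ A}

theorem splitOff_parts :
    (P.splitOff hA hS hSA).parts = insert S (insert (A \ S) (P.parts.erase A)) := rfl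

theorem mem_splitOff_parts :
    B ∈ (P.splitOff hA hS hSA).parts ↔ B = S ∨ B = A \ S ∨ B ≠ A ∧ B ∈ P.parts := by
  rw [splitOff_parts, mem_insert, mem_insert, mem_erase]

theorem splitOff_le : P.splitOff hA hS hSA ≤ P := by
  intro B hB
  rcases mem_splitOff_parts.1 hB with rfl | rfl | hB
  exacts [⟨A, hA, hSA.subset⟩, ⟨A, hA, sdiff_subset⟩, ⟨B, hB.2, le_rfl⟩]

end Finpartition

section SamePart

variable {P Q : Finpartition (univ : Finset V)} {u v x : V}

theorem samePart_splitOff {A S : Finset V} {hA : A ∈ P.parts} {hS : S.Nonempty} {hSA : S ⊂ A} :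
    samePart (P.splitOff hA hS hSA) u v ↔ samePart P u v ∧ (u ∈ S ↔ v ∈ S) := by
  constructor
  · rintro ⟨B, hB, hu, hv⟩
    rcases Finpartition.mem_splitOff_parts.1 hB with rfl | rfl | ⟨hBA, hB⟩
    · exact ⟨⟨A, hA, hSA.subset hu, hSA.subset hv⟩, iff_of_true hu hv⟩
    · rw [mem_sdiff] at hu hv
      exact ⟨⟨A, hA, hu.1, hv.1⟩, iff_of_false hu.2 hv.2⟩
    · have hBS : Disjoint B S := (P.disjoint hB hA hBA).mono_right hSA.subset
      exact ⟨⟨B, hB, hu, hv⟩, iff_of_false (disjoint_left.1 hBS hu) (disjoint_left.1 hBS hv)⟩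
  · rintro ⟨⟨B, hB, hu, hv⟩, huv⟩
    by_cases hBA : B = A
    · subst hBA
      by_cases huS : u ∈ S
      · exact ⟨S, Finpartition.mem_splitOff_parts.2 (Or.inl rfl), huS, huv.1 huS⟩
      · exact ⟨B \ S, Finpartition.mem_splitOff_parts.2 (Or.inr (Or.inl rfl)),
          mem_sdiff.2 ⟨hu, huS⟩, mem_sdiff.2 ⟨hv, mt huv.2 huS⟩⟩
    · exact ⟨B, Finpartition.mem_splitOff_parts.2 (Or.inr (Or.inr ⟨hBA, hB⟩)), hu, hv⟩

theorem IsISP.of_le {G : SimpleGraph V} (hP : IsISP G P) (hQP : Q ≤ P) : IsISP G Q := by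
  intro B hB u hu v hv
  obtain ⟨C, hC, hBC⟩ := hQP hB
  exact hP C hC u (hBC hu) v (hBC hv)

theorem ne_of_samePart (u v : V) (h : ¬(samePart P u v ↔ samePart Q u v)) : P ≠ Q := by
  rintro rfl
  exact h Iff.rfl

theorem MovedBy.eq_or_eq_of_samePart (h : MovedBy P Q x)
    (huv : ¬(samePart P u v ↔ samePart Q u v)) : x = u ∨ x = v := by
  by_contra! hx
  exact huv (h.2 u v hx.1.symm hx.2.symm)

theorem IsISP.exists_splitOff {G : SimpleGraph V} {A S : Finset V} (hP : IsISP G P)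
    (hA : A ∈ P.parts) (hS : S.Nonempty) (hSA : S ⊂ A) :
    ∃ Q : {Q : Finpartition (univ : Finset V) // IsISP G Q},
      Q.1.parts = insert S (insert (A \ S) (P.parts.erase A)) ∧
      ∀ u v, samePart Q.1 u v ↔ samePart P u v ∧ (u ∈ S ↔ v ∈ S) :=
  ⟨⟨P.splitOff hA hS hSA, hP.of_le Finpartition.splitOff_le⟩, rfl,
    fun _ _ => samePart_splitOff (hA := hA) (hS := hS) (hSA := hSA)⟩

end SamePart

section BellGraph

variable {G : SimpleGraph V} {P Q : {P : Finpartition (univ : Finset V) // IsISP G P}}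
  {u v u' v' : V}

theorem bellGraph_adj_of_samePart (x u v : V) (huv : ¬(samePart P.1 u v ↔ samePart Q.1 u v))
    (h : ∀ u v, u ≠ x → v ≠ x → (samePart P.1 u v ↔ samePart Q.1 u v)) :
    (BellGraph G).Adj P Q :=
  ⟨x, ne_of_samePart u v huv, h⟩

theorem bellGraph_not_adj_of_samePart (huv : ¬(samePart P.1 u v ↔ samePart Q.1 u v))
    (huv' : ¬(samePart P.1 u' v' ↔ samePart Q.1 u' v'))
    (hu : u ≠ u') (hu' : u ≠ v') (hv : v ≠ u') (hv' : v ≠ v') : ¬ (BellGraph G).Adj P Q := by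
  rintro ⟨x, hx⟩
  rcases hx.eq_or_eq_of_samePart huv with rfl | rfl <;>
    rcases hx.eq_or_eq_of_samePart huv' with h | h <;> contradiction

end BellGraph

theorem stmt8 (G : SimpleGraph V)
    (P : {P : Finpartition (univ : Finset V) // IsISP G P})
    (A : Finset V) (hA : A ∈ P.1.parts) (hcard : 4 ≤ A.card) :
    ∃ a₁ a₂, a₁ ∈ A ∧ a₂ ∈ A ∧ a₁ ≠ a₂ ∧
      ∃ Q₁ Q₂ : {P : Finpartition (univ : Finset V) // IsISP G P},
        Q₁.1.parts = insert ({a₁} : Finset V) (insert (A.erase a₁) (P.1.parts \ {A})) ∧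
        Q₂.1.parts = insert ({a₂} : Finset V) (insert (A.erase a₂) (P.1.parts \ {A})) ∧
        ¬ (BellGraph G).Adj Q₁ Q₂ ∧
        ∃ R₁ R₂ : {P : Finpartition (univ : Finset V) // IsISP G P},
          R₁ ≠ R₂ ∧
          (BellGraph G).Adj Q₁ R₁ ∧ (BellGraph G).Adj Q₂ R₁ ∧
          (BellGraph G).Adj Q₁ R₂ ∧ (BellGraph G).Adj Q₂ R₂ ∧
          R₁ ≠ P ∧ ¬ (BellGraph G).Adj P R₁ ∧
          R₂ ≠ P ∧ ¬ (BellGraph G).Adj P R₂ := by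
  obtain ⟨a, b, c, d, ha, hb, hc, hd, hab, hac, had, hbc, hbd, hcd⟩ := three_lt_card_iff.1 hcard
  have hP : ∀ {u v}, u ∈ A → v ∈ A → samePart P.1 u v := fun hu hv => ⟨A, hA, hu, hv⟩
  obtain ⟨Q₁, hQ₁, sQ₁⟩ := P.2.exists_splitOff hA (singleton_nonempty a)
    (ssubset_iff.2 ⟨c, by simpa using hac.symm, by simp [insert_subset_iff, ha, hc]⟩)
  obtain ⟨Q₂, hQ₂, sQ₂⟩ := P.2.exists_splitOff hA (singleton_nonempty b)
    (ssubset_iff.2 ⟨c, by simpa using hbc.symm, by simp [insert_subset_iff, hb, hc]⟩)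
  obtain ⟨R₁, -, sR₁⟩ := Q₁.2.exists_splitOff (by simp [hQ₁] : A \ {a} ∈ Q₁.1.parts)
    (singleton_nonempty b) (ssubset_iff.2 ⟨c, by simpa using hbc.symm,
      by simp [insert_subset_iff, hb, hc, hab.symm, hac.symm]⟩)
  obtain ⟨R₂, -, sR₂⟩ := P.2.exists_splitOff hA (insert_nonempty a {b})
    (ssubset_iff.2 ⟨c, by simp [hac.symm, hbc.symm], by simp [insert_subset_iff, ha, hb, hc]⟩)
  refine ⟨a, b, ha, hb, hab, Q₁, Q₂, by simp only [hQ₁, sdiff_singleton_eq_erase],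
    by simp only [hQ₂, sdiff_singleton_eq_erase],
    bellGraph_not_adj_of_samePart ?_ ?_ hab had hbc.symm hcd, R₁, R₂,
    ne_of_apply_ne Subtype.val (ne_of_samePart a b ?_),
    bellGraph_adj_of_samePart b b c ?_ ?_, bellGraph_adj_of_samePart a a c ?_ ?_,
    bellGraph_adj_of_samePart b a b ?_ ?_, bellGraph_adj_of_samePart a a b ?_ ?_,
    ne_of_apply_ne Subtype.val (ne_of_samePart a c ?_),
    bellGraph_not_adj_of_samePart ?_ ?_ hab had hbc.symm hcd,
    ne_of_apply_ne Subtype.val (ne_of_samePart a c ?_),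
    bellGraph_not_adj_of_samePart ?_ ?_ hab had hbc.symm hcd⟩
  all_goals simp +contextual [sQ₁, sQ₂, sR₁, sR₂, hP, ha, hb, hc, hd, hab, hab.symm, hac.symm,
    had.symm, hbc.symm, hbd.symm]
end

section
/- Let G₁ and G₂ be graphs. If the graphs obtained from G₁ and G₂ by deleting all universal vertices are isomorphic, then the Bell colouring graphs B(G₁) and B(G₂) are isomorphic. -/
open Finset

variable {V : Type*} [Fintype V] [DecidableEq V]

/-!
A universal vertex is a singleton part of every partition into independent sets, and it can never
be the vertex that moves along an edge of the Bell colouring graph. So restricting partitions to the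
non-universal vertices, and conversely extending a partition of them by singletons, are inverse
bijections that preserve adjacency: `B(G)` is isomorphic to `B(H)` for every induced subgraph `H`
containing all non-universal vertices. Applying this to `G₁` and `G₂` with the common induced
subgraph given by the isomorphism proves the theorem.
-/

namespace Finpartition

variable {α : Type*} [DecidableEq α] {s t : Finset α}

theorem mem_parts_iff_exists_part_eq (P : Finpartition s) :
    t ∈ P.parts ↔ ∃ a ∈ s, P.part a = t := by
  constructor
  · intro ht
    obtain ⟨a, ha⟩ := P.nonempty_of_mem_parts ht
    exact ⟨a, P.le ht ha, P.part_eq_of_mem ht ha⟩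
  · rintro ⟨a, ha, rfl⟩
    exact P.part_mem.2 ha

theorem ext_part {P Q : Finpartition s} (h : ∀ a, P.part a = Q.part a) : P = Q := by
  ext t
  simp only [mem_parts_iff_exists_part_eq, h]

end Finpartition

section SamePart

variable {P Q : Finpartition (univ : Finset V)} {u v : V}

theorem samePart_iff_part_eq : samePart P u v ↔ P.part u = P.part v :=
  P.mem_part_iff_exists.symm.trans (P.mem_part_iff_part_eq_part (mem_univ u) (mem_univ v))

theorem samePart_refl (P : Finpartition (univ : Finset V)) (u : V) : samePart P u u :=
  samePart_iff_part_eq.2 rfl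

theorem samePart_comm_s15 : samePart P u v ↔ samePart P v u := by
  simp only [samePart_iff_part_eq, eq_comm]

theorem ext_of_samePart (h : ∀ u v, samePart P u v ↔ samePart Q u v) : P = Q :=
  Finpartition.ext_part fun u => by
    ext v
    exact P.mem_part_iff_exists.trans ((h v u).trans Q.mem_part_iff_exists.symm)

theorem samePart_ofSetoid (s : Setoid V) [DecidableRel s.r] :
    samePart (Finpartition.ofSetoid s) u v ↔ s u v :=
  (Finpartition.ofSetoid s).mem_part_iff_exists.symm.trans
    (Finpartition.mem_part_ofSetoid_iff_rel.trans s.comm')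

theorem isISP_iff_samePart {G : SimpleGraph V} :
    IsISP G P ↔ ∀ u v, samePart P u v → ¬ G.Adj u v := by
  constructor
  · rintro hP u v ⟨A, hA, hu, hv⟩
    exact hP A hA u hu v hv
  · intro hP A hA u hu v hv
    exact hP u v ⟨A, hA, hu, hv⟩

theorem samePart_iff_eq_of_isUniversal {G : SimpleGraph V} (hP : IsISP G P) {x : V}
    (hx : IsUniversal G x) (v : V) : samePart P x v ↔ x = v := by
  refine ⟨fun h => ?_, by rintro rfl; exact samePart_refl P x⟩
  by_contra hne
  exact isISP_iff_samePart.1 hP x v h (hx v (Ne.symm hne))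

theorem not_isUniversal_of_movedBy {G : SimpleGraph V} (hP : IsISP G P) (hQ : IsISP G Q)
    {x : V} (h : MovedBy P Q x) : ¬ IsUniversal G x := by
  intro hx
  refine h.1 (ext_of_samePart fun u v => ?_)
  rcases eq_or_ne u x with rfl | hu
  · rw [samePart_iff_eq_of_isUniversal hP hx, samePart_iff_eq_of_isUniversal hQ hx]
  rcases eq_or_ne v x with rfl | hv
  · rw [samePart_comm_s15, samePart_comm_s15 (P := Q), samePart_iff_eq_of_isUniversal hP hx,
      samePart_iff_eq_of_isUniversal hQ hx]
  exact h.2 u v hu hv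

end SamePart

section Transfer

variable {W : Type*} [Fintype W] [DecidableEq W]

noncomputable def restrictPartition (f : W → V) (P : Finpartition (univ : Finset V)) :
    Finpartition (univ : Finset W) :=
  haveI := Classical.decRel (Setoid.ker (P.part ∘ f)).r
  Finpartition.ofSetoid (Setoid.ker (P.part ∘ f))

theorem samePart_restrictPartition (f : W → V) (P : Finpartition (univ : Finset V)) (a b : W) :
    samePart (restrictPartition f P) a b ↔ samePart P (f a) (f b) := by
  rw [restrictPartition, samePart_ofSetoid, samePart_iff_part_eq]
  rfl

def extendSetoid (f : W ↪ V) (Q : Finpartition (univ : Finset W)) : Setoid V where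
  r u v := u = v ∨ ∃ a b, f a = u ∧ f b = v ∧ samePart Q a b
  iseqv := by
    refine ⟨fun u => Or.inl rfl, ?_, ?_⟩
    · rintro u v (rfl | ⟨a, b, rfl, rfl, hab⟩)
      · exact Or.inl rfl
      · exact Or.inr ⟨b, a, rfl, rfl, samePart_comm_s15.1 hab⟩
    · rintro u v w (rfl | ⟨a, b, rfl, rfl, hab⟩) hvw
      · exact hvw
      rcases hvw with rfl | ⟨b', c, hb, rfl, hbc⟩
      · exact Or.inr ⟨a, b, rfl, rfl, hab⟩
      obtain rfl := f.injective hb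
      exact Or.inr ⟨a, c, rfl, rfl, samePart_iff_part_eq.2
        ((samePart_iff_part_eq.1 hab).trans (samePart_iff_part_eq.1 hbc))⟩

noncomputable def extendPartition (f : W ↪ V) (Q : Finpartition (univ : Finset W)) :
    Finpartition (univ : Finset V) :=
  haveI := Classical.decRel (extendSetoid f Q).r
  Finpartition.ofSetoid (extendSetoid f Q)

theorem samePart_extendPartition (f : W ↪ V) (Q : Finpartition (univ : Finset W)) (u v : V) :
    samePart (extendPartition f Q) u v ↔ u = v ∨ ∃ a b, f a = u ∧ f b = v ∧ samePart Q a b := by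
  rw [extendPartition, samePart_ofSetoid]
  rfl

theorem restrictPartition_extendPartition (f : W ↪ V) (Q : Finpartition (univ : Finset W)) :
    restrictPartition f (extendPartition f Q) = Q := by
  refine ext_of_samePart fun a b => ?_
  rw [samePart_restrictPartition, samePart_extendPartition]
  constructor
  · rintro (hab | ⟨a', b', ha, hb, hab⟩)
    · rw [f.injective hab]
      exact samePart_refl Q b
    · rwa [← f.injective ha, ← f.injective hb]
  · exact fun hab => Or.inr ⟨a, b, rfl, rfl, hab⟩

variable {G : SimpleGraph V} {H : SimpleGraph W}

theorem isISP_restrictPartition (f : H ↪g G) {P : Finpartition (univ : Finset V)}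
    (hP : IsISP G P) : IsISP H (restrictPartition f P) :=
  isISP_iff_samePart.2 fun a b hab hadj =>
    isISP_iff_samePart.1 hP _ _ ((samePart_restrictPartition f P a b).1 hab)
      (f.map_adj_iff.2 hadj)

theorem isISP_extendPartition (f : H ↪g G) {Q : Finpartition (univ : Finset W)}
    (hQ : IsISP H Q) : IsISP G (extendPartition f.toEmbedding Q) := by
  refine isISP_iff_samePart.2 fun u v huv hadj => ?_
  rcases (samePart_extendPartition _ Q u v).1 huv with rfl | ⟨a, b, rfl, rfl, hab⟩
  · exact G.irrefl hadj
  · exact isISP_iff_samePart.1 hQ a b hab (f.map_adj_iff.1 hadj)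

theorem extendPartition_restrictPartition (f : W ↪ V) {P : Finpartition (univ : Finset V)}
    (hP : IsISP G P) (hf : ∀ v, ¬ IsUniversal G v → v ∈ Set.range f) :
    extendPartition f (restrictPartition f P) = P := by
  refine ext_of_samePart fun u v => ?_
  rw [samePart_extendPartition]
  constructor
  · rintro (rfl | ⟨a, b, rfl, rfl, hab⟩)
    · exact samePart_refl P u
    · exact (samePart_restrictPartition f P a b).1 hab
  · intro huv
    by_cases hu : IsUniversal G u
    · exact Or.inl ((samePart_iff_eq_of_isUniversal hP hu v).1 huv)
    by_cases hv : IsUniversal G v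
    · exact Or.inl ((samePart_iff_eq_of_isUniversal hP hv u).1 (samePart_comm_s15.1 huv)).symm
    obtain ⟨a, rfl⟩ := hf u hu
    obtain ⟨b, rfl⟩ := hf v hv
    exact Or.inr ⟨a, b, rfl, rfl, (samePart_restrictPartition f P a b).2 huv⟩

theorem exists_movedBy_restrictPartition (f : W ↪ V)
    (hf : ∀ v, ¬ IsUniversal G v → v ∈ Set.range f) {P Q : Finpartition (univ : Finset V)}
    (hP : IsISP G P) (hQ : IsISP G Q) {x : V} (h : MovedBy P Q x) :
    ∃ y, MovedBy (restrictPartition f P) (restrictPartition f Q) y := by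
  obtain ⟨y, rfl⟩ := hf x (not_isUniversal_of_movedBy hP hQ h)
  refine ⟨y, fun heq => h.1 ?_, fun a b ha hb => ?_⟩
  · rw [← extendPartition_restrictPartition f hP hf, heq,
      extendPartition_restrictPartition f hQ hf]
  · rw [samePart_restrictPartition, samePart_restrictPartition]
    exact h.2 _ _ (f.injective.ne ha) (f.injective.ne hb)

theorem movedBy_extendPartition (f : W ↪ V) {P Q : Finpartition (univ : Finset W)} {y : W}
    (h : MovedBy P Q y) : MovedBy (extendPartition f P) (extendPartition f Q) (f y) := by
  refine ⟨fun heq => h.1 ?_, fun u v hu hv => ?_⟩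
  · rw [← restrictPartition_extendPartition f P, heq, restrictPartition_extendPartition]
  rw [samePart_extendPartition, samePart_extendPartition]
  refine or_congr_right ⟨?_, ?_⟩ <;> rintro ⟨a, b, rfl, rfl, hab⟩ <;>
    refine ⟨a, b, rfl, rfl, ?_⟩
  · exact (h.2 a b (ne_of_apply_ne f hu) (ne_of_apply_ne f hv)).1 hab
  · exact (h.2 a b (ne_of_apply_ne f hu) (ne_of_apply_ne f hv)).2 hab

noncomputable def bellGraphIsoOfEmbedding (f : H ↪g G)
    (hf : ∀ v, ¬ IsUniversal G v → v ∈ Set.range f) : BellGraph G ≃g BellGraph H where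
  toFun P := ⟨restrictPartition f P, isISP_restrictPartition f P.2⟩
  invFun Q := ⟨extendPartition f.toEmbedding Q, isISP_extendPartition f Q.2⟩
  left_inv P := Subtype.ext (extendPartition_restrictPartition f.toEmbedding P.2 hf)
  right_inv Q := Subtype.ext (restrictPartition_extendPartition f.toEmbedding Q)
  map_rel_iff' := by
    rintro ⟨P, hP⟩ ⟨Q, hQ⟩
    constructor
    · rintro ⟨y, hy⟩
      refine ⟨f y, ?_⟩
      show MovedBy P Q (f y)
      rw [← extendPartition_restrictPartition f.toEmbedding hP hf,
        ← extendPartition_restrictPartition f.toEmbedding hQ hf]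
      exact movedBy_extendPartition f.toEmbedding hy
    · rintro ⟨x, hx⟩
      exact exists_movedBy_restrictPartition f.toEmbedding hf hP hQ hx

end Transfer

theorem stmt15 {V₁ V₂ : Type*} [Fintype V₁] [DecidableEq V₁] [Fintype V₂] [DecidableEq V₂]
    (G₁ : SimpleGraph V₁) (G₂ : SimpleGraph V₂)
    (hiso : Nonempty
      ((SimpleGraph.induce {v : V₁ | ¬ IsUniversal G₁ v} G₁) ≃g
       (SimpleGraph.induce {v : V₂ | ¬ IsUniversal G₂ v} G₂))) :
    Nonempty (BellGraph G₁ ≃g BellGraph G₂) := by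
  obtain ⟨e⟩ := hiso
  classical
  let f₁ := SimpleGraph.Embedding.induce (G := G₁) {v | ¬ IsUniversal G₁ v}
  let f₂ := (SimpleGraph.Embedding.induce (G := G₂) {v | ¬ IsUniversal G₂ v}).comp e.toEmbedding
  have hf₁ : ∀ v, ¬ IsUniversal G₁ v → v ∈ Set.range f₁ := fun v hv => ⟨⟨v, hv⟩, rfl⟩
  have hf₂ : ∀ v, ¬ IsUniversal G₂ v → v ∈ Set.range f₂ := fun v hv =>
    ⟨e.symm ⟨v, hv⟩, by simp [f₂]⟩
  exact ⟨(bellGraphIsoOfEmbedding f₁ hf₁).trans (bellGraphIsoOfEmbedding f₂ hf₂).symm⟩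
end
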